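/- Let k ≥ 1 be an integer and let G be a graph with n vertices, m edges and minimum degree δ(G) ≥ k − 1. Then γ×k^r(G) ≥ (3kn − 2m)/(2k + 1). -/

import Mathlib

/-- `S` is a `k`-tuple restrained dominating set of `G`: every vertex has at least `k`
vertices of `S` in its closed neighborhood, and every vertex outside `S` has at least
`k` neighbors outside `S`. -/
def SimpleGraph.IsKRDS {V : Type*} (G : SimpleGraph V) (k : ℕ) (S : Set V) : Prop :=
  (∀ x : V, k ≤ ((insert x (G.neighborSet x)) ∩ S).ncard) ∧
  ∀ x : V, x ∉ S → k ≤ (G.neighborSet x \ S).ncard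

/-- The `k`-tuple restrained domination number of `G`. -/
noncomputable def SimpleGraph.kRDNum {V : Type*} [Fintype V] (G : SimpleGraph V) (k : ℕ) : ℕ :=
  sInf {m | ∃ S : Set V, G.IsKRDS k S ∧ S.ncard = m}

/-!
Let `S` be a `k`-tuple restrained dominating set with `s` vertices. Counting degrees,
`2m = ∑_{v ∈ S} |N(v) ∩ S| + 2 e(S, V - S) + ∑_{v ∉ S} |N(v) - S|`. Each vertex of `S`
has at least `k - 1` neighbours in `S`, and each vertex outside `S` has at least `k`
neighbours in `S` and at least `k` outside `S`, so `2m ≥ (k - 1) s + 3k (n - s)`, i.e.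
`(2k + 1) s ≥ 3kn - 2m`. The hypothesis `δ(G) ≥ k - 1` makes `V` itself a `k`-tuple
restrained dominating set, so the infimum defining `γ×k^r(G)` is attained.
-/

open Finset

namespace SimpleGraph

variable {V : Type*} {G : SimpleGraph V} {k : ℕ}

theorem isKRDS_univ [Finite V] (h : ∀ v, k - 1 ≤ (G.neighborSet v).ncard) :
    G.IsKRDS k Set.univ := by
  refine ⟨fun v ↦ ?_, fun v hv ↦ absurd (Set.mem_univ v) hv⟩
  rw [Set.inter_univ, Set.ncard_insert_of_notMem G.notMem_neighborSet_self]
  have := h v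
  omega

theorem exists_isKRDS_ncard_eq_kRDNum [Fintype V] (h : ∃ S, G.IsKRDS k S) :
    ∃ S, G.IsKRDS k S ∧ S.ncard = G.kRDNum k := by
  obtain ⟨S, hS⟩ := h
  exact Nat.sInf_mem
    (⟨S.ncard, S, hS, rfl⟩ : {m | ∃ S : Set V, G.IsKRDS k S ∧ S.ncard = m}.Nonempty)

section Counting

variable [Fintype V] [DecidableEq V] [DecidableRel G.Adj] {s : Finset V} {v : V}

theorem ncard_neighborSet_inter_coe (s : Finset V) (v : V) :
    (G.neighborSet v ∩ s).ncard = #(G.neighborFinset v ∩ s) := by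
  rw [← Set.ncard_coe_finset, coe_inter, coe_neighborFinset]

theorem ncard_neighborSet_diff_coe (s : Finset V) (v : V) :
    (G.neighborSet v \ s).ncard = #(G.neighborFinset v \ s) := by
  rw [← Set.ncard_coe_finset, coe_sdiff, coe_neighborFinset]

/-- Both sides count the edges between `s` and its complement. -/
theorem sum_card_neighborFinset_sdiff_eq_sum_card_neighborFinset_inter (s : Finset V) :
    ∑ v ∈ s, #(G.neighborFinset v \ s) = ∑ v ∈ sᶜ, #(G.neighborFinset v ∩ s) := by
  have hsdiff : ∀ v, G.neighborFinset v \ s = bipartiteAbove G.Adj sᶜ v := fun v ↦ by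
    ext w; simp [bipartiteAbove, and_comm]
  have hinter : ∀ v, G.neighborFinset v ∩ s = bipartiteBelow G.Adj s v := fun v ↦ by
    ext w; simp [bipartiteBelow, and_comm, G.adj_comm]
  simp only [hsdiff, hinter]
  exact sum_card_bipartiteAbove_eq_sum_card_bipartiteBelow G.Adj

theorem IsKRDS.le_card_neighborFinset_inter_add_one (h : G.IsKRDS k s) (hv : v ∈ s) :
    k ≤ #(G.neighborFinset v ∩ s) + 1 := by
  have hk := h.1 v
  rw [Set.insert_inter_of_mem (mem_coe.2 hv)] at hk
  rw [← ncard_neighborSet_inter_coe]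
  exact hk.trans (Set.ncard_insert_le _ _)

theorem IsKRDS.le_card_neighborFinset_inter (h : G.IsKRDS k s) (hv : v ∉ s) :
    k ≤ #(G.neighborFinset v ∩ s) := by
  have hk := h.1 v
  rwa [Set.insert_inter_of_notMem (mt mem_coe.1 hv), ncard_neighborSet_inter_coe] at hk

theorem IsKRDS.le_card_neighborFinset_sdiff (h : G.IsKRDS k s) (hv : v ∉ s) :
    k ≤ #(G.neighborFinset v \ s) := by
  rw [← ncard_neighborSet_diff_coe]
  exact h.2 v hv

theorem IsKRDS.three_mul_card_le (h : G.IsKRDS k s) :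
    3 * k * Fintype.card V ≤ 2 * #G.edgeFinset + (2 * k + 1) * #s := by
  set a : V → ℕ := fun v ↦ #(G.neighborFinset v ∩ s)
  set b : V → ℕ := fun v ↦ #(G.neighborFinset v \ s)
  have hdeg :
      2 * #G.edgeFinset = ∑ v ∈ s, a v + ∑ v ∈ s, b v + ∑ v ∈ sᶜ, a v + ∑ v ∈ sᶜ, b v := by
    rw [← sum_degrees_eq_twice_card_edges, ← sum_add_sum_compl s]
    simp only [degree, ← card_inter_add_card_sdiff (G.neighborFinset _) s, sum_add_distrib]
    ring
  have hcross : ∑ v ∈ s, b v = ∑ v ∈ sᶜ, a v :=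
    sum_card_neighborFinset_sdiff_eq_sum_card_neighborFinset_inter s
  have hin : #s * k ≤ ∑ v ∈ s, a v + #s := by
    simpa [sum_add_distrib] using
      card_nsmul_le_sum s (a · + 1) k fun _ hv ↦ h.le_card_neighborFinset_inter_add_one hv
  have hout_a : #sᶜ * k ≤ ∑ v ∈ sᶜ, a v :=
    card_nsmul_le_sum _ _ k fun _ hv ↦ h.le_card_neighborFinset_inter (mem_compl.1 hv)
  have hout_b : #sᶜ * k ≤ ∑ v ∈ sᶜ, b v :=
    card_nsmul_le_sum _ _ k fun _ hv ↦ h.le_card_neighborFinset_sdiff (mem_compl.1 hv)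
  rw [← card_add_card_compl s]
  nlinarith

end Counting

end SimpleGraph

open SimpleGraph in
theorem kRDNum_lower_bound_general {V : Type*} [Fintype V] (G : SimpleGraph V) (k : ℕ)
    (hdeg : ∀ v : V, k - 1 ≤ (G.neighborSet v).ncard) :
    ((3 * k * Fintype.card V : ℚ) - 2 * (G.edgeSet.ncard : ℚ)) / (2 * k + 1) ≤
      (G.kRDNum k : ℚ) := by
  classical
  obtain ⟨S, hS, hcard⟩ := exists_isKRDS_ncard_eq_kRDNum ⟨_, isKRDS_univ hdeg⟩
  obtain ⟨s, rfl⟩ := S.toFinite.exists_finset_coe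
  have key : (3 * k * Fintype.card V : ℚ) ≤ 2 * #G.edgeFinset + (2 * k + 1) * #s := by
    exact_mod_cast hS.three_mul_card_le
  rw [← hcard, Set.ncard_coe_finset, ← coe_edgeFinset, Set.ncard_coe_finset,
    div_le_iff₀ (by positivity)]
  linarith

/-- For a graph G with n vertices, m edges and δ(G) ≥ k − 1,
γ×k^r(G) ≥ (3kn − 2m)/(2k + 1). -/
theorem kRDNum_lower_bound {V : Type*} [Fintype V] (G : SimpleGraph V) (k : ℕ)
    (hk : 1 ≤ k) (hdeg : ∀ v : V, k - 1 ≤ (G.neighborSet v).ncard) :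
    ((3 * k * Fintype.card V : ℚ) - 2 * (G.edgeSet.ncard : ℚ)) / (2 * k + 1) ≤
      (G.kRDNum k : ℚ) :=
  kRDNum_lower_bound_general G k hdeg
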